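/- arXiv:2112.06284 — 2 statements merged into one kernel-verified Lean document; each statement's English description precedes it below -/
import Mathlib

section
/- Consider the recursion S_{n+1} = (S_n + φΛ)/(1 + φ f*(S_n,I_n) + φ(μ₀+ν)), I_{n+1} = (I_n + φ S_{n+1} f*(S_n,I_n))/(1 + φ(μ₀+μ₁+β)), R_{n+1} = (R_n + φβ I_{n+1} + φν S_{n+1})/(1 + φμ₀), where φ, Λ, μ₀, μ₁, β, ν > 0 and f*(S,I) ≥ 0 for all S,I ≥ 0. If S₀, I₀, R₀ ≥ 0, then S_n, I_n, R_n ≥ 0 for all n ≥ 0, and moreover S_n > 0 for all n ≥ 1. -/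
/-- unconditional positivity of the NSFD scheme. -/
theorem stmt9 (φ Λ μ₀ μ₁ β ν : ℝ)
    (hφ : 0 < φ) (hΛ : 0 < Λ) (hμ₀ : 0 < μ₀) (hμ₁ : 0 < μ₁)
    (hβ : 0 < β) (hν : 0 < ν)
    (fstar : ℝ → ℝ → ℝ)
    (hfstar : ∀ S I : ℝ, 0 ≤ S → 0 ≤ I → 0 ≤ fstar S I)
    (S I R : ℕ → ℝ)
    (hS : ∀ n : ℕ, S (n + 1) =
      (S n + φ * Λ) / (1 + φ * fstar (S n) (I n) + φ * (μ₀ + ν)))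
    (hI : ∀ n : ℕ, I (n + 1) =
      (I n + φ * S (n + 1) * fstar (S n) (I n)) / (1 + φ * (μ₀ + μ₁ + β)))
    (hR : ∀ n : ℕ, R (n + 1) =
      (R n + φ * β * I (n + 1) + φ * ν * S (n + 1)) / (1 + φ * μ₀))
    (hS0 : 0 ≤ S 0) (hI0 : 0 ≤ I 0) (hR0 : 0 ≤ R 0) :
    (∀ n : ℕ, 0 ≤ S n ∧ 0 ≤ I n ∧ 0 ≤ R n) ∧
    (∀ n : ℕ, 1 ≤ n → 0 < S n) := by
  have key : ∀ n : ℕ, 0 ≤ S n ∧ 0 ≤ I n ∧ 0 ≤ R n ∧ (1 ≤ n → 0 < S n) := by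
    intro n
    induction n with
    | zero => exact ⟨hS0, hI0, hR0, by omega⟩
    | succ n ih =>
      obtain ⟨hSn, hIn, hRn, -⟩ := ih
      have hf := hfstar (S n) (I n) hSn hIn
      have hd1 : 0 < 1 + φ * fstar (S n) (I n) + φ * (μ₀ + ν) := by positivity
      have hSp : 0 < S (n + 1) := by
        rw [hS n]; exact div_pos (by positivity) hd1
      have hIp : 0 ≤ I (n + 1) := by
        rw [hI n]
        apply div_nonneg _ (by positivity)
        have : 0 ≤ φ * S (n + 1) * fstar (S n) (I n) := by positivity
        linarith
      have hRp : 0 ≤ R (n + 1) := by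
        rw [hR n]
        apply div_nonneg _ (by positivity)
        have h1 : 0 ≤ φ * β * I (n + 1) := by positivity
        have h2 : 0 ≤ φ * ν * S (n + 1) := by positivity
        linarith
      exact ⟨hSp.le, hIp, hRp, fun _ => hSp⟩
  exact ⟨fun n => ⟨(key n).1, (key n).2.1, (key n).2.2.1⟩, fun n hn => (key n).2.2.2 hn⟩
end

section
/- Suppose sequences (S_n), (I_n) of nonnegative reals satisfy Λ − p(S_{n+1}+I_{n+1}) ≤ (S_{n+1}+I_{n+1} − (S_n+I_n))/φ ≤ Λ − q(S_{n+1}+I_{n+1}) for all n, where 0 < q ≤ p and φ, Λ > 0. Then (φΛ + (S_n+I_n))/(1+φp) ≤ S_{n+1}+I_{n+1} ≤ (φΛ + (S_n+I_n))/(1+φq) for all n, and consequently every limit point L of (S_n+I_n) satisfies Λ/p ≤ L ≤ Λ/q. -/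
open Filter Topology

/-- two-sided asymptotic bounds for S+I under the NSFD scheme. -/
theorem stmt11 (φ Λ p q : ℝ) (hφ : 0 < φ) (hΛ : 0 < Λ) (hq : 0 < q) (hpq : q ≤ p)
    (S I : ℕ → ℝ) (hSnn : ∀ n, 0 ≤ S n) (hInn : ∀ n, 0 ≤ I n)
    (hlow : ∀ n : ℕ, Λ - p * (S (n + 1) + I (n + 1)) ≤
      ((S (n + 1) + I (n + 1)) - (S n + I n)) / φ)
    (hup : ∀ n : ℕ, ((S (n + 1) + I (n + 1)) - (S n + I n)) / φ ≤
      Λ - q * (S (n + 1) + I (n + 1))) :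
    (∀ n : ℕ,
      (φ * Λ + (S n + I n)) / (1 + φ * p) ≤ S (n + 1) + I (n + 1) ∧
      S (n + 1) + I (n + 1) ≤ (φ * Λ + (S n + I n)) / (1 + φ * q)) ∧
    (∀ L : ℝ, MapClusterPt L atTop (fun n => S n + I n) →
      Λ / p ≤ L ∧ L ≤ Λ / q) := by
  have hp : 0 < p := hq.trans_le hpq
  have h1p : (0:ℝ) < 1 + φ * p := by positivity
  have h1q : (0:ℝ) < 1 + φ * q := by positivity
  set T : ℕ → ℝ := fun n => S n + I n with hT
  have hTnn : ∀ n, 0 ≤ T n := fun n => add_nonneg (hSnn n) (hInn n)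
  have key : ∀ n, (φ * Λ + T n) / (1 + φ * p) ≤ T (n + 1) ∧
      T (n + 1) ≤ (φ * Λ + T n) / (1 + φ * q) := by
    intro n
    have hl : (Λ - p * T (n + 1)) * φ ≤ T (n + 1) - T n := (le_div_iff₀ hφ).mp (hlow n)
    have hu : T (n + 1) - T n ≤ (Λ - q * T (n + 1)) * φ := (div_le_iff₀ hφ).mp (hup n)
    constructor
    · rw [div_le_iff₀ h1p]; nlinarith
    · rw [le_div_iff₀ h1q]; nlinarith
  refine ⟨key, ?_⟩
  set r : ℝ := 1 / (1 + φ * p) with hr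
  set s : ℝ := 1 / (1 + φ * q) with hs
  have hr0 : 0 ≤ r := by positivity
  have hr1 : r < 1 := by
    rw [hr, div_lt_one h1p]; nlinarith
  have hs0 : 0 ≤ s := by positivity
  have hs1 : s < 1 := by
    rw [hs, div_lt_one h1q]; nlinarith
  have hpne : p ≠ 0 := hp.ne'
  have hqne : q ≠ 0 := hq.ne'
  have h1pne : (1 + φ * p) ≠ 0 := h1p.ne'
  have h1qne : (1 + φ * q) ≠ 0 := h1q.ne'
  -- lower bound: Λ/p * (1 - r^n) ≤ T n
  have low : ∀ n, Λ / p * (1 - r ^ n) ≤ T n := by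
    intro n
    induction n with
    | zero => simpa using hTnn 0
    | succ n ih =>
      have hEq : Λ / p * (1 - r ^ (n + 1)) = (φ * Λ + Λ / p * (1 - r ^ n)) / (1 + φ * p) := by
        rw [hr]
        linear_combination (-(Λ / p)) * mul_one_div_cancel h1pne + (φ * Λ * (1 / (1 + φ * p))) * mul_inv_cancel₀ hpne
      calc Λ / p * (1 - r ^ (n + 1))
          = (φ * Λ + Λ / p * (1 - r ^ n)) / (1 + φ * p) := hEq
        _ ≤ (φ * Λ + T n) / (1 + φ * p) := by
            gcongr
        _ ≤ T (n + 1) := (key n).1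
  -- upper bound: T n - Λ/q ≤ s^n * (T 0 - Λ/q)
  have up : ∀ n, T n - Λ / q ≤ s ^ n * (T 0 - Λ / q) := by
    intro n
    induction n with
    | zero => simp
    | succ n ih =>
      have hEq : (φ * Λ + T n) / (1 + φ * q) - Λ / q = s * (T n - Λ / q) := by
        rw [hs]
        field_simp
        ring
      have h1 : T (n + 1) - Λ / q ≤ s * (T n - Λ / q) := by
        rw [← hEq]; linarith [(key n).2]
      calc T (n + 1) - Λ / q ≤ s * (T n - Λ / q) := h1
        _ ≤ s * (s ^ n * (T 0 - Λ / q)) := by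
            exact mul_le_mul_of_nonneg_left ih hs0
        _ = s ^ (n + 1) * (T 0 - Λ / q) := by ring
  intro L hL
  have hfreq : ∀ ε : ℝ, 0 < ε → ∃ᶠ n in atTop, |T n - L| < ε := by
    intro ε hε
    have h := (mapClusterPt_iff_frequently.mp hL) (Metric.ball L ε) (Metric.ball_mem_nhds _ hε)
    refine h.mono fun n hn => ?_
    rw [Metric.mem_ball, Real.dist_eq] at hn
    exact hn
  have hrt : Tendsto (fun n : ℕ => Λ / p * r ^ n) atTop (𝓝 0) := by
    have := tendsto_pow_atTop_nhds_zero_of_lt_one hr0 hr1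
    simpa using this.const_mul (Λ / p)
  have hst : Tendsto (fun n : ℕ => s ^ n * (T 0 - Λ / q)) atTop (𝓝 0) := by
    have := tendsto_pow_atTop_nhds_zero_of_lt_one hs0 hs1
    simpa using this.mul_const (T 0 - Λ / q)
  constructor
  · apply le_of_forall_pos_le_add
    intro ε hε
    have hev : ∀ᶠ n in atTop, Λ / p * r ^ n < ε / 2 :=
      hrt.eventually_lt_const (by positivity)
    obtain ⟨n, hn1, hn2⟩ := ((hfreq (ε / 2) (by positivity)).and_eventually hev).exists
    have habs := abs_lt.mp hn1
    have := low n
    nlinarith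
  · apply le_of_forall_pos_le_add
    intro ε hε
    have hev : ∀ᶠ n in atTop, s ^ n * (T 0 - Λ / q) < ε / 2 :=
      hst.eventually_lt_const (by positivity)
    obtain ⟨n, hn1, hn2⟩ := ((hfreq (ε / 2) (by positivity)).and_eventually hev).exists
    have habs := abs_lt.mp hn1
    have := up n
    linarith
end
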